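/- Well-formedness of shapes is preserved under time passage: if S is a well-formed shape and t ∈ ℝ≥0, then S + t is well-formed. -/

import Mathlib

inductive Shape where
  | basic (V : Set (EuclideanSpace ℝ (Fin 3))) (m : ℝ) (p v : EuclideanSpace ℝ (Fin 3)) : Shape
  | comp (S₁ S₂ : Shape) (X : Set (EuclideanSpace ℝ (Fin 3))) : Shape

def Shape.points : Shape → Set (EuclideanSpace ℝ (Fin 3))
  | .basic V _ _ _ => V
  | .comp S₁ S₂ _ => S₁.points ∪ S₂.points

def Shape.velA : Shape → EuclideanSpace ℝ (Fin 3)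
  | .basic _ _ _ v => v
  | .comp S₁ _ _ => S₁.velA

def Shape.bdry : Shape → Set (EuclideanSpace ℝ (Fin 3))
  | .basic V _ _ _ => frontier V
  | .comp S₁ S₂ _ => (S₁.bdry ∪ S₂.bdry) \ interior (S₁.points ∪ S₂.points)

def Shape.wf : Shape → Prop
  | .basic _ _ _ _ => True
  | .comp S₁ S₂ X => S₁.wf ∧ S₂.wf ∧ X.Nonempty ∧
      X = S₁.points ∩ S₂.points ∧ X = S₁.bdry ∩ S₂.bdry ∧ S₁.velA = S₂.velA

noncomputable def Shape.trans : Shape → ℝ → Shape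
  | .basic V m p v, t => .basic ((fun x => x + t • v) '' V) m (p + t • v) v
  | .comp S₁ S₂ X, t => .comp (S₁.trans t) (S₂.trans t) ((fun x => x + t • S₁.velA) '' X)

/-
All parts of a well-formed shape share one velocity `v`, so `S + t` is the image of `S` under the
translation `x ↦ x + t • v`. Being an injective homeomorphism, the translation commutes with unions,
intersections, differences, frontiers and interiors, hence with every set in the well-formedness
conditions.
-/

namespace Shape

lemma velA_trans (S : Shape) (t : ℝ) : (S.trans t).velA = S.velA := by
  induction S with
  | basic V m p v => rfl
  | comp S₁ S₂ X ih₁ _ => simpa only [trans, velA] using ih₁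

lemma points_trans {S : Shape} (t : ℝ) (h : S.wf) :
    (S.trans t).points = (· + t • S.velA) '' S.points := by
  induction S with
  | basic V m p v => rfl
  | comp S₁ S₂ X ih₁ ih₂ =>
    obtain ⟨h₁, h₂, -, -, -, hv⟩ := h
    simp only [trans, points, velA, ih₁ h₁, ih₂ h₂, ← hv, Set.image_union]

lemma bdry_trans {S : Shape} (t : ℝ) (h : S.wf) :
    (S.trans t).bdry = (· + t • S.velA) '' S.bdry := by
  induction S with
  | basic V m p v => exact ((Homeomorph.addRight (t • v)).image_frontier V).symm
  | comp S₁ S₂ X ih₁ ih₂ =>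
    obtain ⟨h₁, h₂, -, -, -, hv⟩ := h
    simp only [trans, bdry, velA, ih₁ h₁, ih₂ h₂, points_trans t h₁, points_trans t h₂, ← hv,
      ← Set.image_union, Set.image_sdiff (add_left_injective _)]
    exact congrArg _ ((Homeomorph.addRight (t • S₁.velA)).image_interior _).symm

end Shape

theorem wf_preserved_by_time_general (S : Shape) (t : ℝ) (h : S.wf) :
    (S.trans t).wf := by
  induction S with
  | basic V m p v => trivial
  | comp S₁ S₂ X ih₁ ih₂ =>
    obtain ⟨h₁, h₂, hne, hX, hXb, hv⟩ := h
    refine ⟨ih₁ h₁, ih₂ h₂, hne.image _, ?_, ?_, ?_⟩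
    · rw [Shape.points_trans t h₁, Shape.points_trans t h₂, ← hv,
        ← Set.image_inter (add_left_injective _), ← hX]
    · rw [Shape.bdry_trans t h₁, Shape.bdry_trans t h₂, ← hv,
        ← Set.image_inter (add_left_injective _), ← hXb]
    · rw [Shape.velA_trans, Shape.velA_trans, hv]

theorem wf_preserved_by_time (S : Shape) (t : ℝ) (ht : 0 ≤ t) (h : S.wf) :
    (S.trans t).wf :=
  wf_preserved_by_time_general S t h
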